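/- arXiv:2404.00574 — 2 statements merged into one kernel-verified Lean document; each statement's English description precedes it below -/
import Mathlib

section
/- Let α be a stable exponent sequence and β an exponent sequence such that Λ_1(β) is nuclear (i.e., for every positive integer k there exists an integer l > k with ∑_{n=0}^∞ e^{β_n(1/l − 1/k)} < ∞) and such that n α_n ≤ β_n for all sufficiently large n. Let θ : ℕ → ℂ satisfy |θ_n| ≤ C₀ e^{m₀ α_n} for all n, for some m₀ ∈ ℕ and C₀ > 0 (θ belongs to the dual of Λ_∞(α)). Then there exists d ∈ ℕ such that for every positive integer k there is C > 0 with ∑_{j=0}^∞ |θ_{j+n}| · e^{-β_j/k} ≤ C · e^{d α_n} for all n ∈ ℕ (i.e., the Hankel operator H_θ : Λ_∞(α) → Λ_1(β) is continuous and satisfies the compactness condition, the index d being independent of k). -/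
/-!
Stability makes `α` subadditive up to the factor `M`, so `|θ_{j+n}| ≤ C₀ e^{K α_j} e^{K α_n}`
with `K = m₀ M`: the Hankel entries split into a factor in `j` and one in `n`. The `n`-factor
gives the index `d = ⌈K⌉`. The `j`-factor is absorbed by the weight: taking `l > k` from
nuclearity, `K α_j ≤ (j / l) α_j ≤ β_j / l` for large `j`, so `e^{K α_j - β_j / k}` is dominated
by the summable `e^{β_j (1/l - 1/k)}`.
-/

open Filter Real

lemma apply_add_le_of_stable {α : ℕ → ℝ} (hα_nonneg : ∀ n, 0 ≤ α n) (hα_mono : Monotone α)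
    {M : ℝ} (hM : 0 ≤ M) (hstab : ∀ n, α (2 * n) ≤ M * α n) (j n : ℕ) :
    α (j + n) ≤ M * (α j + α n) :=
  calc α (j + n) ≤ α (2 * max j n) := hα_mono (by omega)
    _ ≤ M * α (max j n) := hstab _
    _ ≤ M * (α j + α n) := by
      gcongr
      rcases le_total j n with h | h
      · simpa [max_eq_right h] using hα_nonneg j
      · simpa [max_eq_left h] using hα_nonneg n

lemma norm_apply_add_le_of_stable {α : ℕ → ℝ} {θ : ℕ → ℂ} (hα_nonneg : ∀ n, 0 ≤ α n)
    (hα_mono : Monotone α) {M : ℝ} (hM : 0 ≤ M) (hstab : ∀ n, α (2 * n) ≤ M * α n)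
    {m C : ℝ} (hm : 0 ≤ m) (hθ : ∀ n, ‖θ n‖ ≤ C * exp (m * α n)) (j n : ℕ) :
    ‖θ (j + n)‖ ≤ C * exp (m * M * α n) * exp (m * M * α j) := by
  have hC : 0 ≤ C := nonneg_of_mul_nonneg_left ((norm_nonneg _).trans (hθ 0)) (exp_pos _)
  calc ‖θ (j + n)‖ ≤ C * exp (m * α (j + n)) := hθ _
    _ ≤ C * exp (m * (M * (α j + α n))) := by
      gcongr; exact apply_add_le_of_stable hα_nonneg hα_mono hM hstab j n
    _ = C * exp (m * M * α n) * exp (m * M * α j) := by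
      rw [mul_assoc C, ← exp_add]; ring_nf

lemma summable_exp_mul_mul_exp_neg_div {α β : ℕ → ℝ} (hα_nonneg : ∀ n, 0 ≤ α n)
    (hαβ : ∀ᶠ n : ℕ in atTop, (n : ℝ) * α n ≤ β n) {k l : ℝ} (hl : 0 < l)
    (hnuc : Summable fun n => exp (β n * (1 / l - 1 / k))) (K : ℝ) :
    Summable fun j => exp (K * α j) * exp (-β j / k) := by
  have hlarge : ∀ᶠ j : ℕ in atTop, l * K ≤ j :=
    tendsto_natCast_atTop_atTop.eventually_ge_atTop _
  refine hnuc.of_norm_bounded_eventually_nat ?_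
  filter_upwards [hαβ, hlarge] with j hj hjK
  have hKα : K * α j ≤ β j / l := by
    rw [le_div_iff₀ hl]
    nlinarith [mul_le_mul_of_nonneg_right hjK (hα_nonneg j)]
  rw [norm_of_nonneg (by positivity), ← exp_add]
  gcongr
  linarith [show β j * (1 / l - 1 / k) = β j / l + -β j / k by ring]

lemma tsum_le_mul_tsum_of_le {f g : ℕ → ℝ} {c : ℝ} (hf : ∀ j, 0 ≤ f j)
    (hfg : ∀ j, f j ≤ c * g j) (hg : Summable g) : ∑' j, f j ≤ c * ∑' j, g j :=
  (Summable.tsum_le_tsum hfg ((hg.mul_left c).of_nonneg_of_le hf hfg) (hg.mul_left c)).trans_eq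
    tsum_mul_left

theorem hankel_infinite_to_nuclear_finite_compact_general
    (α β : ℕ → ℝ) (θ : ℕ → ℂ)
    (hα_nonneg : ∀ n, 0 ≤ α n) (hα_mono : Monotone α)
    (hα_stable : ∃ M : ℝ, 0 < M ∧ ∀ n : ℕ, α (2 * n) ≤ M * α n)
    (hβ_nuclear : ∀ k : ℕ, 0 < k → ∃ l : ℕ, k < l ∧
      Summable fun n : ℕ => Real.exp (β n * (1 / (l : ℝ) - 1 / (k : ℝ))))
    (hαβ : ∃ N : ℕ, ∀ n : ℕ, N ≤ n → (n : ℝ) * α n ≤ β n)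
    (hθ : ∃ m₀ : ℕ, ∃ C₀ : ℝ, 0 < C₀ ∧ ∀ n : ℕ, ‖θ n‖ ≤ C₀ * Real.exp ((m₀ : ℝ) * α n)) :
    ∃ d : ℕ, ∀ k : ℕ, 0 < k → ∃ C : ℝ, 0 < C ∧
      ∀ n : ℕ, (∑' j : ℕ, ‖θ (j + n)‖ * Real.exp (-β j / (k : ℝ))) ≤
        C * Real.exp ((d : ℝ) * α n) := by
  obtain ⟨M, hM, hstab⟩ := hα_stable
  obtain ⟨m₀, C₀, hC₀, hθb⟩ := hθ
  set K : ℝ := m₀ * M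
  refine ⟨⌈K⌉₊, fun k hk => ?_⟩
  obtain ⟨l, hkl, hnuc⟩ := hβ_nuclear k hk
  have hsum := summable_exp_mul_mul_exp_neg_div hα_nonneg (eventually_atTop.2 hαβ)
    (by exact_mod_cast hk.trans hkl) hnuc K
  set S := ∑' j, exp (K * α j) * exp (-β j / k)
  have hS : 0 < S := hsum.tsum_pos (fun _ => by positivity) 0 (by positivity)
  refine ⟨C₀ * S, by positivity, fun n => ?_⟩
  have hentry (j : ℕ) : ‖θ (j + n)‖ * exp (-β j / k) ≤
      C₀ * exp (K * α n) * (exp (K * α j) * exp (-β j / k)) := by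
    rw [← mul_assoc]
    gcongr
    exact norm_apply_add_le_of_stable hα_nonneg hα_mono hM.le hstab (Nat.cast_nonneg m₀) hθb j n
  have hKd : exp (K * α n) ≤ exp (⌈K⌉₊ * α n) := by
    gcongr; exacts [hα_nonneg n, Nat.le_ceil K]
  calc ∑' j, ‖θ (j + n)‖ * exp (-β j / k)
      ≤ C₀ * exp (K * α n) * S := tsum_le_mul_tsum_of_le (fun _ => by positivity) hentry hsum
    _ ≤ C₀ * S * exp (⌈K⌉₊ * α n) := by
      rw [mul_right_comm]; gcongr

/-- Let `α` be a stable exponent sequence and `β` an exponent sequence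
with `Λ_1(β)` nuclear and `n α_n ≤ β_n` for all sufficiently large `n`. Then for every
`θ` in the dual of `Λ_∞(α)`, the Hankel operator `H_θ : Λ_∞(α) → Λ_1(β)` is continuous
and satisfies the compactness condition (the index `d` is independent of `k`). -/
theorem hankel_infinite_to_nuclear_finite_compact
    (α β : ℕ → ℝ) (θ : ℕ → ℂ)
    (hα_nonneg : ∀ n, 0 ≤ α n) (hα_mono : Monotone α)
    (hα_tendsto : Filter.Tendsto α Filter.atTop Filter.atTop)
    (hα_stable : ∃ M : ℝ, 0 < M ∧ ∀ n : ℕ, α (2 * n) ≤ M * α n)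
    (hβ_nonneg : ∀ n, 0 ≤ β n) (hβ_mono : Monotone β)
    (hβ_tendsto : Filter.Tendsto β Filter.atTop Filter.atTop)
    (hβ_nuclear : ∀ k : ℕ, 0 < k → ∃ l : ℕ, k < l ∧
      Summable fun n : ℕ => Real.exp (β n * (1 / (l : ℝ) - 1 / (k : ℝ))))
    (hαβ : ∃ N : ℕ, ∀ n : ℕ, N ≤ n → (n : ℝ) * α n ≤ β n)
    (hθ : ∃ m₀ : ℕ, ∃ C₀ : ℝ, 0 < C₀ ∧ ∀ n : ℕ, ‖θ n‖ ≤ C₀ * Real.exp ((m₀ : ℝ) * α n)) :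
    ∃ d : ℕ, ∀ k : ℕ, 0 < k → ∃ C : ℝ, 0 < C ∧
      ∀ n : ℕ, (∑' j : ℕ, ‖θ (j + n)‖ * Real.exp (-β j / (k : ℝ))) ≤
        C * Real.exp ((d : ℝ) * α n) :=
  hankel_infinite_to_nuclear_finite_compact_general α β θ hα_nonneg hα_mono hα_stable hβ_nuclear hαβ
    hθ
end

section
/- Let α be an exponent sequence and let θ : ℕ → ℂ satisfy θ ∈ Λ_1(α). Then the forward shift operator F is mean ergodic on Λ_1(α) with Cesàro means converging to 0: for every positive integer k, lim_{n→∞} ∑_{j=0}^∞ | (1/n) ∑_{m=1}^{n} θ̃_{j-m} | · e^{-α_j/k} = 0, where θ̃_i := θ_i for i ≥ 0 and θ̃_i := 0 for i < 0. -/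
/-!
Since `α` is monotone, `e^{-α_{i+m}/k} ≤ e^{-α_m/(2k)} e^{-α_i/(2k)}`, so the `k`-th seminorm of
`F^m θ` is at most `e^{-α_m/(2k)}` times the `2k`-th seminorm of `θ`. By the triangle inequality
the `k`-th seminorm of the `n`-th Cesàro mean is then at most the `n`-th Cesàro mean of the null
sequence `e^{-α_m/(2k)}`, times a constant.
-/

open Filter Finset Topology

section WeightedNorm

variable {E : Type*} [SeminormedAddCommGroup E] {w v : ℕ → ℝ}

/-- `forwardShift m` is the power `F^m` of the forward shift `F`. -/
def forwardShift (m : ℕ) (θ : ℕ → E) (j : ℕ) : E :=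
  if m ≤ j then θ (j - m) else 0

lemma support_norm_forwardShift_mul_subset (m : ℕ) (θ : ℕ → E) (w : ℕ → ℝ) :
    Function.support (fun j => ‖forwardShift m θ j‖ * w j) ⊆ Set.range (· + m) := by
  intro j hj
  by_cases hmj : m ≤ j
  · exact ⟨j - m, Nat.sub_add_cancel hmj⟩
  · simp [forwardShift, hmj] at hj

lemma summable_norm_forwardShift_mul_iff (m : ℕ) (θ : ℕ → E) :
    Summable (fun j => ‖forwardShift m θ j‖ * w j) ↔
      Summable (fun i => ‖θ i‖ * w (i + m)) := by
  rw [← (add_left_injective m).summable_iff fun j hj =>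
    Function.notMem_support.mp fun h => hj (support_norm_forwardShift_mul_subset m θ w h)]
  simp [Function.comp_def, forwardShift]

lemma tsum_norm_forwardShift_mul (m : ℕ) (θ : ℕ → E) :
    ∑' j, ‖forwardShift m θ j‖ * w j = ∑' i, ‖θ i‖ * w (i + m) := by
  rw [← (add_left_injective m).tsum_eq (support_norm_forwardShift_mul_subset m θ w)]
  simp [forwardShift]

lemma summable_norm_forwardShift_mul (hw : 0 ≤ w) (hwv : ∀ i m, w (i + m) ≤ v m * v i)
    {θ : ℕ → E} (hθ : Summable fun i => ‖θ i‖ * v i) (m : ℕ) :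
    Summable (fun j => ‖forwardShift m θ j‖ * w j) :=
  (summable_norm_forwardShift_mul_iff m θ).mpr <|
    (hθ.mul_left (v m)).of_nonneg_of_le (fun i => mul_nonneg (norm_nonneg _) (hw _))
      fun i => by nlinarith [hwv i m, norm_nonneg (θ i)]

lemma tsum_norm_forwardShift_mul_le (hw : 0 ≤ w) (hwv : ∀ i m, w (i + m) ≤ v m * v i)
    {θ : ℕ → E} (hθ : Summable fun i => ‖θ i‖ * v i) (m : ℕ) :
    ∑' j, ‖forwardShift m θ j‖ * w j ≤ v m * ∑' i, ‖θ i‖ * v i := by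
  rw [tsum_norm_forwardShift_mul, ← tsum_mul_left]
  exact ((summable_norm_forwardShift_mul_iff m θ).mp (summable_norm_forwardShift_mul hw hwv hθ m))
    |>.tsum_le_tsum (fun i => by nlinarith [hwv i m, norm_nonneg (θ i)]) (hθ.mul_left (v m))

lemma tsum_norm_sum_mul_le {ι : Type*} (hw : 0 ≤ w) (s : Finset ι) {f : ι → ℕ → E}
    (hf : ∀ m ∈ s, Summable fun j => ‖f m j‖ * w j) :
    ∑' j, ‖∑ m ∈ s, f m j‖ * w j ≤ ∑ m ∈ s, ∑' j, ‖f m j‖ * w j := by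
  have hle : ∀ j, ‖∑ m ∈ s, f m j‖ * w j ≤ ∑ m ∈ s, ‖f m j‖ * w j := fun j => by
    rw [← sum_mul]
    exact mul_le_mul_of_nonneg_right (norm_sum_le _ _) (hw j)
  rw [← Summable.tsum_finsetSum hf]
  exact Summable.tsum_le_tsum hle
    ((summable_sum hf).of_nonneg_of_le (fun j => mul_nonneg (norm_nonneg _) (hw j)) hle)
    (summable_sum hf)

lemma tsum_norm_cesaro_forwardShift_le {𝕜 : Type*} [RCLike 𝕜] (hw : 0 ≤ w)
    (hwv : ∀ i m, w (i + m) ≤ v m * v i) {θ : ℕ → 𝕜} (hθ : Summable fun i => ‖θ i‖ * v i)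
    (n : ℕ) :
    ∑' j, ‖(n : 𝕜)⁻¹ * ∑ m ∈ Icc 1 n, forwardShift m θ j‖ * w j ≤
      ((n : ℝ)⁻¹ * ∑ m ∈ Icc 1 n, v m) * ∑' i, ‖θ i‖ * v i := by
  simp only [norm_mul, norm_inv, RCLike.norm_natCast, mul_assoc, tsum_mul_left]
  rw [sum_mul]
  gcongr
  calc ∑' j, ‖∑ m ∈ Icc 1 n, forwardShift m θ j‖ * w j
      ≤ ∑ m ∈ Icc 1 n, ∑' j, ‖forwardShift m θ j‖ * w j :=
        tsum_norm_sum_mul_le hw _ fun m _ => summable_norm_forwardShift_mul hw hwv hθ m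
    _ ≤ ∑ m ∈ Icc 1 n, v m * ∑' i, ‖θ i‖ * v i :=
        sum_le_sum fun m _ => tsum_norm_forwardShift_mul_le hw hwv hθ m

end WeightedNorm

lemma Filter.Tendsto.cesaro_Icc {u : ℕ → ℝ} {l : ℝ} (h : Tendsto u atTop (𝓝 l)) :
    Tendsto (fun n : ℕ => (n⁻¹ : ℝ) * ∑ m ∈ Icc 1 n, u m) atTop (𝓝 l) := by
  have := (h.comp (tendsto_add_atTop_nat 1)).cesaro
  refine this.congr fun n => ?_
  rw [range_eq_Ico, Function.comp_def, sum_Ico_add' u, zero_add, Ico_add_one_right_eq_Icc]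

lemma exp_neg_div_add_le {α : ℕ → ℝ} (hα : Monotone α) {k : ℝ} (hk : 0 ≤ k) (i m : ℕ) :
    Real.exp (-α (i + m) / k) ≤ Real.exp (-α m / (2 * k)) * Real.exp (-α i / (2 * k)) := by
  rw [← Real.exp_add, Real.exp_le_exp]
  have hm := hα (Nat.le_add_left m i)
  have hi := hα (Nat.le_add_right i m)
  calc -α (i + m) / k = -α (i + m) / (2 * k) + -α (i + m) / (2 * k) := by ring
    _ ≤ -α m / (2 * k) + -α i / (2 * k) := by gcongr

theorem forward_shift_cesaro_tendsto_zero_general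
    (α : ℕ → ℝ) (θ : ℕ → ℂ)
    (hα_mono : Monotone α)
    (hα_tendsto : Filter.Tendsto α Filter.atTop Filter.atTop)
    (hθ : ∀ k : ℕ, 0 < k → Summable fun n : ℕ => ‖θ n‖ * Real.exp (-α n / (k : ℝ))) :
    ∀ k : ℕ, 0 < k → Filter.Tendsto
      (fun n : ℕ => ∑' j : ℕ,
        ‖(n : ℂ)⁻¹ * ∑ m ∈ Finset.Icc 1 n, (if m ≤ j then θ (j - m) else 0)‖ *
          Real.exp (-α j / (k : ℝ)))
      Filter.atTop (nhds 0) := by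
  intro k hk
  have hθ2k : Summable fun i => ‖θ i‖ * Real.exp (-α i / (2 * k)) := by
    exact_mod_cast hθ (2 * k) (by omega)
  have hv : Tendsto (fun m => Real.exp (-α m / (2 * k))) atTop (𝓝 0) :=
    Real.tendsto_exp_atBot.comp <|
      (tendsto_neg_atTop_atBot.comp hα_tendsto).atBot_div_const (by positivity)
  refine squeeze_zero (fun n => tsum_nonneg fun j => by positivity)
    (fun n => tsum_norm_cesaro_forwardShift_le (fun j => (Real.exp_pos _).le)
      (exp_neg_div_add_le hα_mono k.cast_nonneg) hθ2k n) ?_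
  simpa using hv.cesaro_Icc.mul_const _

/-- For `θ ∈ Λ_1(α)`, the Cesàro means of the forward shift operator
applied to `θ` converge to `0` in every seminorm of `Λ_1(α)`.  Here `θ̃_{j-m}` is
taken to be `0` when `m > j`. -/
theorem forward_shift_cesaro_tendsto_zero
    (α : ℕ → ℝ) (θ : ℕ → ℂ)
    (hα_nonneg : ∀ n, 0 ≤ α n) (hα_mono : Monotone α)
    (hα_tendsto : Filter.Tendsto α Filter.atTop Filter.atTop)
    (hθ : ∀ k : ℕ, 0 < k → Summable fun n : ℕ => ‖θ n‖ * Real.exp (-α n / (k : ℝ))) :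
    ∀ k : ℕ, 0 < k → Filter.Tendsto
      (fun n : ℕ => ∑' j : ℕ,
        ‖(n : ℂ)⁻¹ * ∑ m ∈ Finset.Icc 1 n, (if m ≤ j then θ (j - m) else 0)‖ *
          Real.exp (-α j / (k : ℝ)))
      Filter.atTop (nhds 0) :=
  forward_shift_cesaro_tendsto_zero_general α θ hα_mono hα_tendsto hθ
end
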